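/- arXiv:2408.10213 — 6 statements merged into one kernel-verified Lean document; each statement's English description precedes it below -/
import Mathlib

section
/- Let a: [0,∞) → ℝ satisfy c₁ ≤ a(r) ≤ c₂ for positive constants c₁ ≤ c₂, and |a(r₁) - a(r₂)| ≤ L·|r₁ - r₂| for all r₁, r₂ ≥ 0. For points x₁,…,x_N in ℝ^d, define φ_{ij} = a(‖x_i - x_j‖) / (∑_{k=1}^N a(‖x_i - x_k‖)). Then for all i, j, l ∈ {1,…,N}, |φ_{il} - φ_{jl}| ≤ (L/(N c₁))·(1 + c₂/c₁)·‖x_i - x_j‖. -/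
theorem stmt0 {d N : ℕ} (hN : 0 < N) (a : ℝ → ℝ) (c₁ c₂ L : ℝ)
    (hc₁ : 0 < c₁) (hc₁₂ : c₁ ≤ c₂) (hL : 0 < L)
    (hbound : ∀ r : ℝ, 0 ≤ r → c₁ ≤ a r ∧ a r ≤ c₂)
    (hlip : ∀ r₁ r₂ : ℝ, 0 ≤ r₁ → 0 ≤ r₂ → |a r₁ - a r₂| ≤ L * |r₁ - r₂|)
    (x : Fin N → EuclideanSpace ℝ (Fin d)) :
    ∀ i j l : Fin N,
      |a ‖x i - x l‖ / (∑ k, a ‖x i - x k‖) - a ‖x j - x l‖ / (∑ k, a ‖x j - x k‖)|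
        ≤ (L / (N * c₁)) * (1 + c₂ / c₁) * ‖x i - x j‖ := by
  intro i j l
  set Si := ∑ k, a ‖x i - x k‖ with hSi
  set Sj := ∑ k, a ‖x j - x k‖ with hSj
  have hNpos : (0:ℝ) < N := by exact_mod_cast hN
  have hNc : (0:ℝ) < N * c₁ := mul_pos hNpos hc₁
  have hSi_ge : (N:ℝ) * c₁ ≤ Si := by
    calc (N:ℝ) * c₁ = ∑ _k : Fin N, c₁ := by
          simp [Finset.sum_const, mul_comm]
      _ ≤ Si := Finset.sum_le_sum fun k _ => (hbound _ (norm_nonneg _)).1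
  have hSj_ge : (N:ℝ) * c₁ ≤ Sj := by
    calc (N:ℝ) * c₁ = ∑ _k : Fin N, c₁ := by
          simp [Finset.sum_const, mul_comm]
      _ ≤ Sj := Finset.sum_le_sum fun k _ => (hbound _ (norm_nonneg _)).1
  have hSi_pos : 0 < Si := lt_of_lt_of_le hNc hSi_ge
  have hSj_pos : 0 < Sj := lt_of_lt_of_le hNc hSj_ge
  have ha_lip : ∀ k : Fin N, |a ‖x i - x k‖ - a ‖x j - x k‖| ≤ L * ‖x i - x j‖ := by
    intro k
    refine (hlip _ _ (norm_nonneg _) (norm_nonneg _)).trans ?_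
    have h1 : |‖x i - x k‖ - ‖x j - x k‖| ≤ ‖(x i - x k) - (x j - x k)‖ :=
      abs_norm_sub_norm_le _ _
    have h2 : (x i - x k) - (x j - x k) = x i - x j := by abel
    rw [h2] at h1
    exact mul_le_mul_of_nonneg_left h1 hL.le
  have hS_diff : |Sj - Si| ≤ N * (L * ‖x i - x j‖) := by
    rw [hSi, hSj, ← Finset.sum_sub_distrib]
    refine (Finset.abs_sum_le_sum_abs _ _).trans ?_
    calc ∑ k, |a ‖x j - x k‖ - a ‖x i - x k‖| ≤ ∑ _k : Fin N, L * ‖x i - x j‖ := by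
          refine Finset.sum_le_sum fun k _ => ?_
          rw [abs_sub_comm]; exact ha_lip k
      _ = N * (L * ‖x i - x j‖) := by simp [Finset.sum_const, mul_comm]
  have key : a ‖x i - x l‖ / Si - a ‖x j - x l‖ / Sj
      = (a ‖x i - x l‖ - a ‖x j - x l‖) / Si + a ‖x j - x l‖ * (Sj - Si) / (Si * Sj) := by
    field_simp
    ring
  rw [key]
  have hajl_nonneg : 0 ≤ a ‖x j - x l‖ := (hc₁.le.trans (hbound _ (norm_nonneg _)).1)
  have hajl_le : a ‖x j - x l‖ ≤ c₂ := (hbound _ (norm_nonneg _)).2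
  have t1 : |(a ‖x i - x l‖ - a ‖x j - x l‖) / Si| ≤ (L * ‖x i - x j‖) / (N * c₁) := by
    rw [abs_div, abs_of_pos hSi_pos]
    exact div_le_div₀ (by positivity) (ha_lip l) hNc hSi_ge
  have t2 : |a ‖x j - x l‖ * (Sj - Si) / (Si * Sj)|
      ≤ (c₂ * (N * (L * ‖x i - x j‖))) / ((N * c₁) * (N * c₁)) := by
    rw [abs_div, abs_of_pos (mul_pos hSi_pos hSj_pos), abs_mul, abs_of_nonneg hajl_nonneg]
    refine div_le_div₀ (mul_nonneg (hc₁.le.trans hc₁₂) (by positivity)) ?_ (mul_pos hNc hNc)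
      (mul_le_mul hSi_ge hSj_ge hNc.le hSi_pos.le)
    exact mul_le_mul hajl_le hS_diff (abs_nonneg _) (hc₁.le.trans hc₁₂)
  refine (abs_add_le _ _).trans ?_
  have heq : (L * ‖x i - x j‖) / (N * c₁) + (c₂ * (N * (L * ‖x i - x j‖))) / ((N * c₁) * (N * c₁))
      = (L / (N * c₁)) * (1 + c₂ / c₁) * ‖x i - x j‖ := by
    field_simp
  linarith
end

section
/- (Conditional mono-cluster flocking, position bound.) Let M = 1/(4N‖φ‖_Lip) and ψ(s) = 1 − ‖φ‖_Lip·N·s. Suppose the initial data of the discrete Motsch–Tadmor model satisfies ‖Δ^x(0)‖_F < M and ‖Δ^v(0)‖_F < κ ∫_{‖Δ^x(0)‖_F}^M ψ(s) ds, and the time step satisfies 0 < h < min{1, 1/κ}. Then sup_{n ≥ 0} ‖Δ^x(n)‖_F ≤ M. -/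
lemma quot_lip (A B Si Sj La D Nr c₁ c₂ : ℝ) (hc₁ : 0 < c₁) (hN : 0 < Nr)
    (hAB : |A - B| ≤ La * D) (hS : |Si - Sj| ≤ Nr * La * D)
    (hSi : Nr * c₁ ≤ Si) (hSj : Nr * c₁ ≤ Sj) (hB1 : c₁ ≤ B) (hB2 : B ≤ c₂)
    (hD : 0 ≤ D) (hLa : 0 < La) :
    |A / Si - B / Sj| ≤ (La / (Nr * c₁)) * (1 + c₂ / c₁) * D := by
  have hSi0 : 0 < Si := lt_of_lt_of_le (by positivity) hSi
  have hSj0 : 0 < Sj := lt_of_lt_of_le (by positivity) hSj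
  have hB0 : 0 < B := lt_of_lt_of_le hc₁ hB1
  have hc₂ : 0 < c₂ := lt_of_lt_of_le hc₁ (le_trans hB1 hB2)
  have h1 : A / Si - B / Sj = (A - B) / Si + B * (Sj - Si) / (Si * Sj) := by
    field_simp; ring
  have ha1 : |(A - B) / Si| = |A - B| / Si := by
    rw [abs_div, abs_of_pos hSi0]
  have ha2 : |B * (Sj - Si) / (Si * Sj)| = B * |Sj - Si| / (Si * Sj) := by
    rw [abs_div, abs_mul, abs_of_pos hB0, abs_of_pos (mul_pos hSi0 hSj0)]
  have h2 : |A / Si - B / Sj| ≤ |A - B| / Si + B * |Sj - Si| / (Si * Sj) := by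
    rw [h1]; refine (abs_add_le _ _).trans ?_; rw [ha1, ha2]
  refine h2.trans ?_
  have e1 : |A - B| / Si ≤ (La * D) / (Nr * c₁) :=
    div_le_div₀ (by positivity) hAB (by positivity) hSi
  have hS' : |Sj - Si| ≤ Nr * La * D := by rw [abs_sub_comm]; exact hS
  have e2 : B * |Sj - Si| / (Si * Sj) ≤ (c₂ * (Nr * La * D)) / ((Nr * c₁) * (Nr * c₁)) := by
    apply div_le_div₀ (by positivity)
    · exact mul_le_mul hB2 hS' (abs_nonneg _) hc₂.le
    · positivity
    · exact mul_le_mul hSi hSj (by positivity) hSi0.le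
  have e3 : (La * D) / (Nr * c₁) + (c₂ * (Nr * La * D)) / ((Nr * c₁) * (Nr * c₁))
      = (La / (Nr * c₁)) * (1 + c₂ / c₁) * D := by field_simp
  linarith

lemma l2_mono {ι : Type*} [Fintype ι] (f g : ι → ℝ) (hfg : ∀ p, |f p| ≤ g p) :
    Real.sqrt (∑ p, f p ^ 2) ≤ Real.sqrt (∑ p, g p ^ 2) := by
  apply Real.sqrt_le_sqrt
  apply Finset.sum_le_sum
  intro p _
  have := hfg p
  have h0 : 0 ≤ g p := le_trans (abs_nonneg _) this
  nlinarith [abs_nonneg (f p), sq_abs (f p)]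

lemma l2_tri {ι : Type*} [Fintype ι] (f g : ι → ℝ) (s t : ℝ) (hs : 0 ≤ s) (ht : 0 ≤ t) :
    Real.sqrt (∑ p, (s * f p + t * g p) ^ 2)
      ≤ s * Real.sqrt (∑ p, f p ^ 2) + t * Real.sqrt (∑ p, g p ^ 2) := by
  have key : ∀ u : ι → ℝ, Real.sqrt (∑ p, u p ^ 2) = ‖(WithLp.equiv 2 (ι → ℝ)).symm u‖ := by
    intro u; rw [EuclideanSpace.norm_eq]; simp [sq_abs]
  rw [key, key, key]
  have : (WithLp.equiv 2 (ι → ℝ)).symm (fun p => s * f p + t * g p)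
      = s • (WithLp.equiv 2 (ι → ℝ)).symm f + t • (WithLp.equiv 2 (ι → ℝ)).symm g := rfl
  rw [this]
  calc ‖_ + _‖ ≤ ‖s • (WithLp.equiv 2 (ι → ℝ)).symm f‖ + ‖t • (WithLp.equiv 2 (ι → ℝ)).symm g‖ := norm_add_le _ _
    _ = s * ‖_‖ + t * ‖_‖ := by rw [norm_smul, norm_smul, Real.norm_of_nonneg hs, Real.norm_of_nonneg ht]

lemma l2_const_mul {ι : Type*} [Fintype ι] (f : ι → ℝ) (C : ℝ) (hC : 0 ≤ C) :
    Real.sqrt (∑ p, (C * f p) ^ 2) = C * Real.sqrt (∑ p, f p ^ 2) := by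
  have : ∀ p, (C * f p)^2 = C^2 * f p ^2 := fun p => by ring
  simp_rw [this, ← Finset.mul_sum]
  rw [Real.sqrt_mul (by positivity), Real.sqrt_sq hC]

lemma sum_norm_le_sqrt {N : ℕ} {E : Type*} [NormedAddCommGroup E] (u : Fin N → E) :
    ∑ k, ‖u k‖ ≤ Real.sqrt N * Real.sqrt (∑ k, ‖u k‖ ^ 2) := by
  rw [← Real.sqrt_mul (by positivity)]
  apply Real.le_sqrt_of_sq_le
  simpa using sq_sum_le_card_mul_sum_sq (s := (Finset.univ : Finset (Fin N))) (f := fun k => ‖u k‖)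

-- main w-bound lemma, over one time slice
lemma w_bound {d N : ℕ} (hN : 0 < N) (a : ℝ → ℝ) (c₁ c₂ La Lφ : ℝ)
    (hc₁ : 0 < c₁) (hc₁₂ : c₁ ≤ c₂) (hLa : 0 < La)
    (hbound : ∀ r : ℝ, 0 ≤ r → c₁ ≤ a r ∧ a r ≤ c₂)
    (hlip : ∀ r₁ r₂ : ℝ, 0 ≤ r₁ → 0 ≤ r₂ → |a r₁ - a r₂| ≤ La * |r₁ - r₂|)
    (hLφ : Lφ = (La / (N * c₁)) * (1 + c₂ / c₁))
    (x v : Fin N → EuclideanSpace ℝ (Fin d)) :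
    Real.sqrt (∑ i, ∑ j, ‖(∑ k, (a ‖x i - x k‖ / ∑ l, a ‖x i - x l‖) • v k)
        - (∑ k, (a ‖x j - x k‖ / ∑ l, a ‖x j - x l‖) • v k)‖ ^ 2)
      ≤ Lφ * N * Real.sqrt (∑ i, ∑ j, ‖x i - x j‖ ^ 2)
          * Real.sqrt (∑ i, ∑ j, ‖v i - v j‖ ^ 2) := by
  set S : Fin N → ℝ := fun i => ∑ l, a ‖x i - x l‖ with hS
  set φ : Fin N → Fin N → ℝ := fun i k => a ‖x i - x k‖ / S i with hφ
  set V : ℝ := Real.sqrt (∑ i, ∑ j, ‖v i - v j‖ ^ 2) with hV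
  set X : ℝ := Real.sqrt (∑ i, ∑ j, ‖x i - x j‖ ^ 2) with hX
  have hLφ0 : 0 < Lφ := by
    rw [hLφ]
    have : 0 < c₂ / c₁ := div_pos (lt_of_lt_of_le hc₁ hc₁₂) hc₁
    have hNc : (0:ℝ) < N * c₁ := by positivity
    positivity
  have haLB : ∀ i k, c₁ ≤ a ‖x i - x k‖ := fun i k => (hbound _ (norm_nonneg _)).1
  have haUB : ∀ i k, a ‖x i - x k‖ ≤ c₂ := fun i k => (hbound _ (norm_nonneg _)).2
  have hSlb : ∀ i, (N : ℝ) * c₁ ≤ S i := by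
    intro i
    calc (N:ℝ) * c₁ = ∑ _l : Fin N, c₁ := by simp [mul_comm]
      _ ≤ S i := Finset.sum_le_sum fun l _ => haLB i l
  have hS0 : ∀ i, 0 < S i := fun i => lt_of_lt_of_le (by positivity) (hSlb i)
  have hφsum : ∀ i, ∑ k, φ i k = 1 := by
    intro i
    simp only [hφ]
    rw [← Finset.sum_div]
    exact div_self (hS0 i).ne'
  -- lipschitz of a in positions
  have haD : ∀ i j k, |a ‖x i - x k‖ - a ‖x j - x k‖| ≤ La * ‖x i - x j‖ := by
    intro i j k
    refine (hlip _ _ (norm_nonneg _) (norm_nonneg _)).trans ?_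
    have : |‖x i - x k‖ - ‖x j - x k‖| ≤ ‖x i - x j‖ := by
      have := abs_norm_sub_norm_le (x i - x k) (x j - x k)
      rwa [sub_sub_sub_cancel_right] at this
    exact mul_le_mul_of_nonneg_left this hLa.le
  have hSD : ∀ i j, |S i - S j| ≤ (N:ℝ) * La * ‖x i - x j‖ := by
    intro i j
    rw [hS]
    simp only
    rw [← Finset.sum_sub_distrib]
    refine (Finset.abs_sum_le_sum_abs _ _).trans ?_
    calc ∑ k, |a ‖x i - x k‖ - a ‖x j - x k‖| ≤ ∑ _k : Fin N, La * ‖x i - x j‖ :=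
        Finset.sum_le_sum fun k _ => haD i j k
      _ = (N:ℝ) * La * ‖x i - x j‖ := by simp [mul_assoc]
  have hφlip : ∀ i j k, |φ i k - φ j k| ≤ Lφ * ‖x i - x j‖ := by
    intro i j k
    rw [hLφ]
    exact quot_lip _ _ _ _ La ‖x i - x j‖ N c₁ c₂ hc₁ (by exact_mod_cast hN)
      (haD i j k) (hSD i j) (hSlb i) (hSlb j) (haLB j k) (haUB j k) (norm_nonneg _) hLa
  -- pointwise bound on w differences
  have hVnn : 0 ≤ V := Real.sqrt_nonneg _
  have hXnn : 0 ≤ X := Real.sqrt_nonneg _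
  have hwpt : ∀ i j, ‖(∑ k, φ i k • v k) - ∑ k, φ j k • v k‖
      ≤ (Lφ * (Real.sqrt N * V)) * ‖x i - x j‖ := by
    intro i j
    have hrw : (∑ k, φ i k • v k) - ∑ k, φ j k • v k
        = ∑ k, (φ i k - φ j k) • (v k - v i) := by
      simp only [smul_sub, sub_smul, Finset.sum_sub_distrib]
      rw [← Finset.sum_smul, ← Finset.sum_smul, hφsum i, hφsum j]
      abel
    rw [hrw]
    calc ‖∑ k, (φ i k - φ j k) • (v k - v i)‖ ≤ ∑ k, ‖(φ i k - φ j k) • (v k - v i)‖ :=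
        norm_sum_le _ _
      _ ≤ ∑ k, (Lφ * ‖x i - x j‖) * ‖v k - v i‖ := by
        refine Finset.sum_le_sum fun k _ => ?_
        rw [norm_smul, Real.norm_eq_abs]
        exact mul_le_mul_of_nonneg_right (hφlip i j k) (norm_nonneg _)
      _ = (Lφ * ‖x i - x j‖) * ∑ k, ‖v k - v i‖ := by rw [Finset.mul_sum]
      _ ≤ (Lφ * ‖x i - x j‖) * (Real.sqrt N * V) := by
        refine mul_le_mul_of_nonneg_left ?_ (by positivity)
        refine (sum_norm_le_sqrt (fun k => v k - v i)).trans ?_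
        refine mul_le_mul_of_nonneg_left ?_ (Real.sqrt_nonneg _)
        rw [hV]
        apply Real.sqrt_le_sqrt
        calc ∑ k, ‖v k - v i‖ ^ 2 = ∑ k, ‖v i - v k‖^2 :=
              Finset.sum_congr rfl fun k _ => by rw [norm_sub_rev]
          _ ≤ ∑ i', ∑ j', ‖v i' - v j'‖^2 := by
              refine Finset.single_le_sum (f := fun i' => ∑ j', ‖v i' - v j'‖^2) ?_ (Finset.mem_univ i)
              intro i' _; positivity
      _ = (Lφ * (Real.sqrt N * V)) * ‖x i - x j‖ := by ring
  -- assemble with l2 machinery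
  have step1 : Real.sqrt (∑ i, ∑ j, ‖(∑ k, φ i k • v k) - ∑ k, φ j k • v k‖^2)
      ≤ (Lφ * (Real.sqrt N * V)) * X := by
    rw [← Fintype.sum_prod_type (f := fun p : Fin N × Fin N => ‖(∑ k, φ p.1 k • v k) - ∑ k, φ p.2 k • v k‖^2)]
    have := l2_mono (fun p : Fin N × Fin N => ‖(∑ k, φ p.1 k • v k) - ∑ k, φ p.2 k • v k‖)
      (fun p => (Lφ * (Real.sqrt N * V)) * ‖x p.1 - x p.2‖)
      (fun p => by rw [abs_norm]; exact hwpt p.1 p.2)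
    refine this.trans ?_
    rw [l2_const_mul _ _ (by positivity)]
    rw [hX, Fintype.sum_prod_type (f := fun p : Fin N × Fin N => ‖x p.1 - x p.2‖^2)]
  refine step1.trans ?_
  have hsqrtN : Real.sqrt N ≤ N := by
    have h1 : (1:ℝ) ≤ N := Nat.one_le_cast.mpr hN
    nlinarith [Real.sq_sqrt (show (0:ℝ) ≤ N by positivity), Real.sqrt_nonneg (N:ℝ)]
  calc (Lφ * (Real.sqrt N * V)) * X ≤ (Lφ * ((N:ℝ) * V)) * X := by
        have : Real.sqrt N * V ≤ (N:ℝ) * V := mul_le_mul_of_nonneg_right hsqrtN hVnn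
        have := mul_le_mul_of_nonneg_left this hLφ0.le
        exact mul_le_mul_of_nonneg_right this hXnn
    _ = Lφ * N * X * V := by ring


lemma my_integral (a b c : ℝ) : ∫ s in a..b, (1 - c*s) = (b - a) - c*(b^2-a^2)/2 := by
  rw [intervalIntegral.integral_sub intervalIntegrable_const
    (by apply Continuous.intervalIntegrable; continuity)]
  rw [intervalIntegral.integral_const_mul, integral_id, intervalIntegral.integral_const]
  simp; ring

set_option maxHeartbeats 1000000 in
theorem stmt5 {d N : ℕ} (hN : 0 < N) (a : ℝ → ℝ) (c₁ c₂ La h κ : ℝ)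
    (hc₁ : 0 < c₁) (hc₁₂ : c₁ ≤ c₂) (hLa : 0 < La) (hκ : 0 < κ)
    (hh : 0 < h) (hh1 : h < min 1 (1 / κ))
    (hbound : ∀ r : ℝ, 0 ≤ r → c₁ ≤ a r ∧ a r ≤ c₂)
    (hlip : ∀ r₁ r₂ : ℝ, 0 ≤ r₁ → 0 ≤ r₂ → |a r₁ - a r₂| ≤ La * |r₁ - r₂|)
    (x v : ℕ → Fin N → EuclideanSpace ℝ (Fin d))
    (hx : ∀ n i, x (n + 1) i = x n i + h • v n i)
    (hv : ∀ n i, v (n + 1) i = v n i + (h * κ) •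
      ∑ j, (a ‖x n i - x n j‖ / ∑ k, a ‖x n i - x n k‖) • (v n j - v n i))
    (Lφ M : ℝ) (hLφ : Lφ = (La / (N * c₁)) * (1 + c₂ / c₁)) (hM : M = 1 / (4 * N * Lφ))
    (hinitx : Real.sqrt (∑ i, ∑ j, ‖x 0 i - x 0 j‖ ^ 2) < M)
    (hinitv : Real.sqrt (∑ i, ∑ j, ‖v 0 i - v 0 j‖ ^ 2)
      < κ * ∫ s in (Real.sqrt (∑ i, ∑ j, ‖x 0 i - x 0 j‖ ^ 2))..M, (1 - Lφ * N * s)) :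
    ∀ n, Real.sqrt (∑ i, ∑ j, ‖x n i - x n j‖ ^ 2) ≤ M := by
  obtain ⟨X, hX⟩ : ∃ X' : ℕ → ℝ, ∀ n, X' n = Real.sqrt (∑ i, ∑ j, ‖x n i - x n j‖ ^ 2) :=
    ⟨_, fun n => rfl⟩
  obtain ⟨V, hV'⟩ : ∃ V' : ℕ → ℝ, ∀ n, V' n = Real.sqrt (∑ i, ∑ j, ‖v n i - v n j‖ ^ 2) :=
    ⟨_, fun n => rfl⟩
  have hN' : (0:ℝ) < N := by exact_mod_cast hN
  have hLφ0 : 0 < Lφ := by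
    rw [hLφ]
    have h1 : 0 < c₂ / c₁ := div_pos (lt_of_lt_of_le hc₁ hc₁₂) hc₁
    positivity
  obtain ⟨c, hc⟩ : ∃ c' : ℝ, c' = Lφ * N := ⟨_, rfl⟩
  obtain ⟨F, hF⟩ : ∃ F' : ℝ → ℝ, ∀ s, F' s = s - c * s^2 / 2 := ⟨_, fun s => rfl⟩
  have hc0 : 0 < c := by rw [hc]; positivity
  have hM0 : 0 < M := by rw [hM]; positivity
  have hcM : c * M = 1/4 := by rw [hM, hc]; field_simp
  have hhκ : h * κ < 1 := by
    have := lt_of_lt_of_le hh1 (min_le_right _ _)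
    rw [lt_div_iff₀ hκ] at this
    linarith
  have hXnn : ∀ n, 0 ≤ X n := fun n => (hX n) ▸ Real.sqrt_nonneg _
  have hVnn : ∀ n, 0 ≤ V n := fun n => (hV' n) ▸ Real.sqrt_nonneg _
  -- position step
  have hXstep : ∀ n, X (n+1) ≤ X n + h * V n := by
    intro n
    rw [hX (n+1), hX n, hV' n]
    rw [← Fintype.sum_prod_type (f := fun p : Fin N × Fin N => ‖x (n+1) p.1 - x (n+1) p.2‖^2),
      ← Fintype.sum_prod_type (f := fun p : Fin N × Fin N => ‖x n p.1 - x n p.2‖^2),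
      ← Fintype.sum_prod_type (f := fun p : Fin N × Fin N => ‖v n p.1 - v n p.2‖^2)]
    have hpt : ∀ p : Fin N × Fin N, |‖x (n+1) p.1 - x (n+1) p.2‖|
        ≤ 1 * ‖x n p.1 - x n p.2‖ + h * ‖v n p.1 - v n p.2‖ := by
      intro p
      rw [abs_norm, one_mul]
      have : x (n+1) p.1 - x (n+1) p.2 = (x n p.1 - x n p.2) + h • (v n p.1 - v n p.2) := by
        rw [hx, hx, smul_sub]; abel
      rw [this]
      refine (norm_add_le _ _).trans ?_
      rw [norm_smul, Real.norm_of_nonneg hh.le]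
    refine (l2_mono _ _ hpt).trans ?_
    refine (l2_tri _ _ 1 h zero_le_one hh.le).trans ?_
    rw [one_mul]
  -- velocity step
  have hVstep : ∀ n, V (n+1) ≤ (1 - h*κ) * V n + (h*κ) * (c * X n * V n) := by
    intro n
    obtain ⟨w, hw⟩ : ∃ w' : Fin N → EuclideanSpace ℝ (Fin d),
        ∀ i, w' i = ∑ k, (a ‖x n i - x n k‖ / ∑ l, a ‖x n i - x n l‖) • v n k :=
      ⟨_, fun i => rfl⟩
    have hφsum : ∀ i, ∑ k, (a ‖x n i - x n k‖ / ∑ l, a ‖x n i - x n l‖) = 1 := by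
      intro i
      rw [← Finset.sum_div]
      apply div_self
      have h1 : ∀ l, c₁ ≤ a ‖x n i - x n l‖ := fun l => (hbound _ (norm_nonneg _)).1
      have hpos : (0:ℝ) < ∑ l, a ‖x n i - x n l‖ := by
        calc (0:ℝ) < N * c₁ := by positivity
          _ = ∑ _l : Fin N, c₁ := by simp [mul_comm]
          _ ≤ _ := Finset.sum_le_sum fun l _ => h1 l
      exact hpos.ne'
    have hv2 : ∀ i, v (n+1) i = (1 - h*κ) • v n i + (h*κ) • w i := by
      intro i
      rw [hv]
      have he : ∑ j, (a ‖x n i - x n j‖ / ∑ k, a ‖x n i - x n k‖) • (v n j - v n i)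
          = w i - (1:ℝ) • v n i := by
        rw [hw]
        simp only [smul_sub, Finset.sum_sub_distrib]
        rw [← Finset.sum_smul, hφsum i]
      rw [he, one_smul, smul_sub, sub_smul, one_smul]
      abel
    have hpt : ∀ p : Fin N × Fin N, |‖v (n+1) p.1 - v (n+1) p.2‖|
        ≤ (1 - h*κ) * ‖v n p.1 - v n p.2‖ + (h*κ) * ‖w p.1 - w p.2‖ := by
      intro p
      rw [abs_norm]
      have he : v (n+1) p.1 - v (n+1) p.2
          = (1 - h*κ) • (v n p.1 - v n p.2) + (h*κ) • (w p.1 - w p.2) := by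
        rw [hv2 p.1, hv2 p.2, smul_sub, smul_sub]; abel
      rw [he]
      refine (norm_add_le _ _).trans (le_of_eq ?_)
      rw [norm_smul, norm_smul, Real.norm_of_nonneg (by linarith : (0:ℝ) ≤ 1 - h*κ),
        Real.norm_of_nonneg (by positivity : (0:ℝ) ≤ h*κ)]
    rw [hV' (n+1)]
    rw [← Fintype.sum_prod_type (f := fun p : Fin N × Fin N => ‖v (n+1) p.1 - v (n+1) p.2‖^2)]
    refine (l2_mono _ _ hpt).trans ?_
    refine (l2_tri _ _ (1 - h*κ) (h*κ) (by linarith) (by positivity)).trans ?_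
    have hwb : Real.sqrt (∑ p : Fin N × Fin N, ‖w p.1 - w p.2‖^2) ≤ c * X n * V n := by
      rw [Fintype.sum_prod_type (f := fun p : Fin N × Fin N => ‖w p.1 - w p.2‖^2)]
      have hwe : ∀ i j, w i - w j = (∑ k, (a ‖x n i - x n k‖ / ∑ l, a ‖x n i - x n l‖) • v n k)
          - (∑ k, (a ‖x n j - x n k‖ / ∑ l, a ‖x n j - x n l‖) • v n k) := by
        intro i j; rw [hw, hw]
      simp_rw [hwe]
      rw [hX n, hV' n, hc]
      exact w_bound hN a c₁ c₂ La Lφ hc₁ hc₁₂ hLa hbound hlip hLφ (x n) (v n)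
    have hVeq : Real.sqrt (∑ p : Fin N × Fin N, ‖v n p.1 - v n p.2‖^2) = V n := by
      rw [hV' n, Fintype.sum_prod_type (f := fun p : Fin N × Fin N => ‖v n p.1 - v n p.2‖^2)]
    rw [hVeq]
    have := mul_le_mul_of_nonneg_left hwb (show (0:ℝ) ≤ h*κ by positivity)
    linarith
  -- initial energy
  have hint : (κ * ∫ s in (Real.sqrt (∑ i, ∑ j, ‖x 0 i - x 0 j‖ ^ 2))..M, (1 - Lφ * N * s))
      = κ * (F M - F (X 0)) := by
    have he : ∀ s : ℝ, 1 - Lφ * N * s = 1 - c * s := by intro s; rw [hc]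
    simp_rw [he]
    rw [my_integral, hF, hF, ← hX 0]
    ring
  have hinit2 : V 0 + κ * F (X 0) < κ * F M := by
    have := hinitv
    rw [hint] at this
    rw [← hV' 0] at this
    linarith
  have hinitx2 : X 0 < M := by rw [hX 0]; exact hinitx
  clear hinitv hinitx hint
  -- invariant
  have inv : ∀ n, X n < M ∧ V n + κ * F (X n) < κ * F M := by
    intro n
    induction n with
    | zero => exact ⟨hinitx2, hinit2⟩
    | succ n ih =>
      obtain ⟨hXn, hEn⟩ := ih
      have hcXn : c * X n < 1/4 := by
        calc c * X n < c * M := by exact mul_lt_mul_of_pos_left hXn hc0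
          _ = 1/4 := hcM
      have hψ : 0 ≤ 1 - c * X n := by linarith
      have hFXn : 0 ≤ F (X n) := by
        rw [hF]
        nlinarith [hXnn n]
      have hVlt : V n < κ * F M - κ * F (X n) := by linarith
      have hκFXn : 0 ≤ κ * F (X n) := mul_nonneg hκ.le hFXn
      have hκFM : 0 < κ * F M := by linarith [hVnn n]
      have hFM0 : 0 < F M := by
        have h7 := div_pos hκFM hκ
        rwa [mul_div_cancel_left₀ _ hκ.ne'] at h7
      have hFMM : F M ≤ M := by
        rw [hF]
        have := mul_nonneg hc0.le (sq_nonneg M)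
        linarith
      have hVFM : V n < κ * F M := by linarith
      have hXb : X (n+1) < 2 * M := by
        have h2 : h * V n < F M := by
          have hlt : h < 1/κ := lt_of_lt_of_le hh1 (min_le_right _ _)
          calc h * V n ≤ h * (κ * F M) := mul_le_mul_of_nonneg_left hVFM.le hh.le
            _ < (1/κ) * (κ * F M) := by
                apply mul_lt_mul_of_pos_right hlt
                positivity
            _ = F M := by field_simp
        calc X (n+1) ≤ X n + h * V n := hXstep n
          _ < M + F M := by linarith
          _ ≤ 2 * M := by linarith
      have hEstep : V (n+1) + κ * F (X (n+1)) ≤ V n + κ * F (X n) := by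
        have h1 := hVstep n
        have h2 := hXstep n
        have h3 : F (X (n+1)) - F (X n)
            = (X (n+1) - X n) * (1 - c * X n) - c * (X (n+1) - X n)^2 / 2 := by
          rw [hF, hF]; ring
        have h4 : (X (n+1) - X n) * (1 - c * X n) ≤ (h * V n) * (1 - c * X n) := by
          apply mul_le_mul_of_nonneg_right _ hψ
          linarith
        have h4b : 0 ≤ c * (X (n+1) - X n)^2 := mul_nonneg hc0.le (sq_nonneg _)
        have h5 : F (X (n+1)) - F (X n) ≤ h * V n * (1 - c * X n) := by
          linarith [h3, h4, h4b]
        have h6 : κ * (F (X (n+1)) - F (X n)) ≤ κ * (h * V n * (1 - c * X n)) :=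
          mul_le_mul_of_nonneg_left h5 hκ.le
        linarith [h1, h6]
      have hE1 : V (n+1) + κ * F (X (n+1)) < κ * F M := lt_of_le_of_lt hEstep hEn
      have hFlt : F (X (n+1)) < F M := by
        have h8 : κ * F (X (n+1)) < κ * F M := by linarith [hVnn (n+1)]
        exact (mul_lt_mul_iff_right₀ hκ).mp h8
      refine ⟨?_, hE1⟩
      by_contra hcon
      push_neg at hcon
      rw [hF, hF] at hFlt
      nlinarith [hXb, hcon, hc0, hcM, mul_nonneg (sub_nonneg.mpr hcon) hc0.le,
        sq_nonneg (X (n+1) - M)]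
  intro n
  rw [← hX n]
  exact (inv n).1.le
end

section
/- (Conditional mono-cluster flocking, velocity decay.) Under the flocking conditions ‖Δ^x(0)‖_F < M = 1/(4N‖φ‖_Lip) and ‖Δ^v(0)‖_F < κ ∫_{‖Δ^x(0)‖_F}^M (1 − ‖φ‖_Lip N s) ds, for any constant 0 < C < 1 there exists h₀ > 0 such that for all 0 < h < h₀ and all n ≥ 0, the solution of the discrete Motsch–Tadmor model satisfies ‖Δ^v(n)‖_F ≤ ‖Δ^v(0)‖_F · exp(−Cκψ(M)·n·h), where ψ(M) = 1 − ‖φ‖_Lip·N·M = 3/4. -/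
set_option maxHeartbeats 1000000
open Finset
lemma key_real (β κ h M : ℝ) (X V : ℕ → ℝ) (hβ : 0 < β) (hβM : β * M = 1/4)
    (hκ : 0 < κ) (hh : 0 < h) (hhκ : h * κ < 1)
    (hX0 : ∀ n, 0 ≤ X n) (hV0 : ∀ n, 0 ≤ V n)
    (hXs : ∀ n, X (n+1) ≤ X n + h * V n)
    (hVs : ∀ n, V (n+1) ≤ (1 - h*κ*(1 - β * X n)) * V n)
    (hx0 : X 0 < M)
    (hv0 : V 0 < κ*((M - β*M^2/2) - (X 0 - β*(X 0)^2/2))) :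
    ∀ n, V n ≤ V 0 * (1 - h*κ*(1-β*M))^n := by
  have hM : 0 < M := by nlinarith
  have hκh : 0 < h * κ := mul_pos hh hκ
  have hΨMeq : M - β*M^2/2 = 7/8*M := by linear_combination (-(M/2))*hβM
  have hL0 : V 0 + κ * (X 0 - β*(X 0)^2/2) < κ * (7/8 * M) := by
    have : κ*(M - β*M^2/2) = κ*(7/8*M) := by rw [hΨMeq]
    nlinarith
  have key : ∀ n, X n < M ∧
      V n + κ * (X n - β*(X n)^2/2) ≤ V 0 + κ * (X 0 - β*(X 0)^2/2) := by
    intro n; induction n with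
    | zero => exact ⟨hx0, le_refl _⟩
    | succ n ih =>
      obtain ⟨h1, h2⟩ := ih
      have hXn := hX0 n; have hVn := hV0 n
      have hXn1 := hX0 (n+1); have hVn1 := hV0 (n+1)
      have hβXn : β * X n ≤ 1/4 := by nlinarith [mul_le_mul_of_nonneg_left h1.le hβ.le]
      have hΨX : 0 ≤ X n - β*(X n)^2/2 := by
        nlinarith [mul_le_mul_of_nonneg_right hβXn hXn]
      have hVb : V n ≤ κ * (7/8 * M) := by
        linarith [mul_nonneg hκ.le hΨX]
      have hb2 : X n + h * V n ≤ 15/8 * M := by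
        have e1 : h * V n ≤ h * (κ * (7/8*M)) := mul_le_mul_of_nonneg_left hVb hh.le
        have e2 : (h*κ) * (7/8*M) ≤ 1 * (7/8*M) :=
          mul_le_mul_of_nonneg_right hhκ.le (by linarith)
        nlinarith
      have hbX : X (n+1) ≤ X n + h * V n := hXs n
      have mono : X (n+1) - β*(X (n+1))^2/2 ≤ (X n + h*V n) - β*(X n + h*V n)^2/2 := by
        have hfac : 0 ≤ 1 - β*((X (n+1)) + (X n + h*V n))/2 := by
          have e1 := mul_le_mul_of_nonneg_left (hbX.trans hb2) hβ.le
          have e2 := mul_le_mul_of_nonneg_left hb2 hβ.le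
          nlinarith
        linarith [mul_nonneg (by linarith : (0:ℝ) ≤ X n + h*V n - X (n+1)) hfac,
          sq_nonneg (X n + h*V n), sq_nonneg (X (n+1))]
      have conc : (X n + h*V n) - β*(X n + h*V n)^2/2
          ≤ (X n - β*(X n)^2/2) + h*V n*(1-β*X n) := by
        linarith [mul_nonneg hβ.le (sq_nonneg (h*V n))]
      have hmulκ : κ * (X (n+1) - β*(X (n+1))^2/2)
          ≤ κ * ((X n - β*(X n)^2/2) + h*V n*(1-β*X n)) :=
        mul_le_mul_of_nonneg_left (mono.trans conc) hκ.le
      have lyap : V (n+1) + κ * (X (n+1) - β*(X (n+1))^2/2)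
          ≤ V 0 + κ * (X 0 - β*(X 0)^2/2) := by
        calc V (n+1) + κ * (X (n+1) - β*(X (n+1))^2/2)
            ≤ (1 - h*κ*(1 - β * X n)) * V n
              + κ * ((X n - β*(X n)^2/2) + h*V n*(1-β*X n)) := add_le_add (hVs n) hmulκ
          _ = V n + κ * (X n - β*(X n)^2/2) := by ring
          _ ≤ _ := h2
      refine ⟨?_, lyap⟩
      by_contra hc
      push_neg at hc
      have h15 : X (n+1) ≤ 15/8*M := le_trans hbX hb2
      have hfac : 0 ≤ 1 - β*(X (n+1)+M)/2 := by
        have e1 := mul_le_mul_of_nonneg_left h15 hβ.le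
        nlinarith
      have hineq : 7/8*M ≤ X (n+1) - β*(X (n+1))^2/2 := by
        nlinarith [mul_nonneg (by linarith : (0:ℝ) ≤ X (n+1) - M) hfac]
      have := mul_le_mul_of_nonneg_left hineq hκ.le
      linarith
  have hr0 : 0 ≤ 1 - h*κ*(1-β*M) := by
    have : h*κ*(β*M) = h*κ*(1/4) := by rw [hβM]
    nlinarith
  intro n; induction n with
  | zero => simp
  | succ n ih =>
    have h1 := (key n).1
    calc V (n+1) ≤ (1 - h*κ*(1 - β * X n)) * V n := hVs n
      _ ≤ (1 - h*κ*(1-β*M)) * V n := by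
        nlinarith [mul_nonneg (mul_nonneg (mul_nonneg hκh.le hβ.le)
          (sub_nonneg.mpr h1.le)) (hV0 n)]
      _ ≤ (1 - h*κ*(1-β*M)) * (V 0 * (1 - h*κ*(1-β*M))^n) := mul_le_mul_of_nonneg_left ih hr0
      _ = V 0 * (1 - h*κ*(1-β*M))^(n+1) := by ring


lemma phi_lip {d N : ℕ} (hN : 0 < N) (a : ℝ → ℝ) (c₁ c₂ La Lφ : ℝ)
    (hc₁ : 0 < c₁) (hc₁₂ : c₁ ≤ c₂) (hLa : 0 < La)
    (hbound : ∀ r : ℝ, 0 ≤ r → c₁ ≤ a r ∧ a r ≤ c₂)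
    (hlip : ∀ r₁ r₂ : ℝ, 0 ≤ r₁ → 0 ≤ r₂ → |a r₁ - a r₂| ≤ La * |r₁ - r₂|)
    (hLφ : Lφ = (La / (N * c₁)) * (1 + c₂ / c₁))
    (x : Fin N → EuclideanSpace ℝ (Fin d)) (i j k : Fin N) :
    |a ‖x i - x k‖ / (∑ l, a ‖x i - x l‖) - a ‖x j - x k‖ / (∑ l, a ‖x j - x l‖)|
      ≤ Lφ * ‖x i - x j‖ := by
  have hNR : (0:ℝ) < N := by exact_mod_cast hN
  set S : Fin N → ℝ := fun i => ∑ l, a ‖x i - x l‖ with hS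
  have hSlb : ∀ i, (N:ℝ) * c₁ ≤ S i := by
    intro i
    calc (N:ℝ) * c₁ = ∑ _l : Fin N, c₁ := by simp [mul_comm]
      _ ≤ S i := Finset.sum_le_sum fun l _ => (hbound _ (norm_nonneg _)).1
  have hS0 : ∀ i, 0 < S i := fun i => lt_of_lt_of_le (mul_pos hNR hc₁) (hSlb i)
  set D := ‖x i - x j‖ with hD
  have hD0 : 0 ≤ D := norm_nonneg _
  have hak : |a ‖x i - x k‖ - a ‖x j - x k‖| ≤ La * D := by
    calc |a ‖x i - x k‖ - a ‖x j - x k‖| ≤ La * |‖x i - x k‖ - ‖x j - x k‖| :=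
          hlip _ _ (norm_nonneg _) (norm_nonneg _)
      _ ≤ La * D := by
          apply mul_le_mul_of_nonneg_left _ hLa.le
          have := abs_norm_sub_norm_le (x i - x k) (x j - x k)
          simpa using this
  have hSd : |S j - S i| ≤ (N:ℝ) * (La * D) := by
    calc |S j - S i| = |∑ l, (a ‖x j - x l‖ - a ‖x i - x l‖)| := by
          rw [Finset.sum_sub_distrib]
      _ ≤ ∑ l, |a ‖x j - x l‖ - a ‖x i - x l‖| := Finset.abs_sum_le_sum_abs _ _
      _ ≤ ∑ _l : Fin N, La * D := by
          apply Finset.sum_le_sum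
          intro l _
          calc |a ‖x j - x l‖ - a ‖x i - x l‖| ≤ La * |‖x j - x l‖ - ‖x i - x l‖| :=
                hlip _ _ (norm_nonneg _) (norm_nonneg _)
            _ ≤ La * D := by
                apply mul_le_mul_of_nonneg_left _ hLa.le
                have := abs_norm_sub_norm_le (x j - x l) (x i - x l)
                have e : x j - x l - (x i - x l) = -(x i - x j) := by abel
                rw [e, norm_neg] at this
                exact this
      _ = (N:ℝ) * (La * D) := by simp [mul_comm]
  have hid : a ‖x i - x k‖ / S i - a ‖x j - x k‖ / S j
      = (a ‖x i - x k‖ - a ‖x j - x k‖) / S i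
        + a ‖x j - x k‖ * (S j - S i) / (S i * S j) := by
    field_simp [(hS0 i).ne', (hS0 j).ne']
    ring
  have hjk1 : c₁ ≤ a ‖x j - x k‖ := (hbound _ (norm_nonneg _)).1
  have hjk2 : a ‖x j - x k‖ ≤ c₂ := (hbound _ (norm_nonneg _)).2
  have t1 : |(a ‖x i - x k‖ - a ‖x j - x k‖) / S i| ≤ La * D / ((N:ℝ)*c₁) := by
    rw [abs_div, abs_of_pos (hS0 i)]
    exact div_le_div₀ (mul_nonneg hLa.le hD0) hak (mul_pos hNR hc₁) (hSlb i)
  have t2 : |a ‖x j - x k‖ * (S j - S i) / (S i * S j)|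
      ≤ c₂ * ((N:ℝ) * (La * D)) / (((N:ℝ)*c₁) * ((N:ℝ)*c₁)) := by
    have hc₂0 : 0 < c₂ := hc₁.trans_le hc₁₂
    have hnum : |a ‖x j - x k‖| * |S j - S i| ≤ c₂ * ((N:ℝ)*(La*D)) := by
      apply mul_le_mul _ hSd (abs_nonneg _) hc₂0.le
      rw [abs_of_nonneg (hc₁.le.trans hjk1)]
      exact hjk2
    have hden : ((N:ℝ)*c₁)*((N:ℝ)*c₁) ≤ S i * S j :=
      mul_le_mul (hSlb i) (hSlb j) (mul_pos hNR hc₁).le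
        (le_trans (mul_pos hNR hc₁).le (hSlb i))
    rw [abs_div, abs_of_pos (mul_pos (hS0 i) (hS0 j)), abs_mul]
    exact div_le_div₀
      (mul_nonneg hc₂0.le (mul_nonneg hNR.le (mul_nonneg hLa.le hD0)))
      hnum (mul_pos (mul_pos hNR hc₁) (mul_pos hNR hc₁)) hden
  calc |a ‖x i - x k‖ / S i - a ‖x j - x k‖ / S j|
      ≤ |(a ‖x i - x k‖ - a ‖x j - x k‖) / S i|
        + |a ‖x j - x k‖ * (S j - S i) / (S i * S j)| := by
        rw [hid]; exact abs_add_le _ _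
    _ ≤ La * D / ((N:ℝ)*c₁) + c₂ * ((N:ℝ) * (La * D)) / (((N:ℝ)*c₁) * ((N:ℝ)*c₁)) :=
        add_le_add t1 t2
    _ = Lφ * D := by
        rw [hLφ]
        field_simp

lemma vstep {d N : ℕ} (hN : 0 < N) (a : ℝ → ℝ) (c₁ c₂ La κ h Lφ : ℝ)
    (hc₁ : 0 < c₁) (hc₁₂ : c₁ ≤ c₂) (hLa : 0 < La)
    (hbound : ∀ r : ℝ, 0 ≤ r → c₁ ≤ a r ∧ a r ≤ c₂)
    (hlip : ∀ r₁ r₂ : ℝ, 0 ≤ r₁ → 0 ≤ r₂ → |a r₁ - a r₂| ≤ La * |r₁ - r₂|)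
    (hLφ : Lφ = (La / (N * c₁)) * (1 + c₂ / c₁)) (hLφ0 : 0 < Lφ)
    (hκh0 : 0 ≤ h * κ) (hκh1 : h * κ ≤ 1)
    (x v v' : Fin N → EuclideanSpace ℝ (Fin d))
    (hrec : ∀ i, v' i = v i + (h * κ) •
      ∑ j, (a ‖x i - x j‖ / ∑ k, a ‖x i - x k‖) • (v j - v i)) :
    Real.sqrt (∑ i, ∑ j, ‖v' i - v' j‖^2)
      ≤ (1 - h*κ*(1 - Lφ*(N:ℝ)* Real.sqrt (∑ i, ∑ j, ‖x i - x j‖^2)))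
        * Real.sqrt (∑ i, ∑ j, ‖v i - v j‖^2) := by
  have hNR : (0:ℝ) < N := by exact_mod_cast hN
  set S : Fin N → ℝ := fun i => ∑ l, a ‖x i - x l‖ with hS
  have hSlb : ∀ i, (N:ℝ) * c₁ ≤ S i := by
    intro i
    calc (N:ℝ) * c₁ = ∑ _l : Fin N, c₁ := by simp [mul_comm]
      _ ≤ S i := Finset.sum_le_sum fun l _ => (hbound _ (norm_nonneg _)).1
  have hS0 : ∀ i, 0 < S i := fun i => lt_of_lt_of_le (mul_pos hNR hc₁) (hSlb i)
  set φ : Fin N → Fin N → ℝ := fun i k => a ‖x i - x k‖ / S i with hφ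
  have hφ1 : ∀ i, ∑ k, φ i k = 1 := by
    intro i
    rw [hφ]
    rw [← Finset.sum_div]
    exact div_self (hS0 i).ne'
  have hφlip : ∀ i j k, |φ i k - φ j k| ≤ Lφ * ‖x i - x j‖ := by
    intro i j k
    exact phi_lip hN a c₁ c₂ La Lφ hc₁ hc₁₂ hLa hbound hlip hLφ x i j k
  set X := Real.sqrt (∑ i, ∑ j, ‖x i - x j‖^2) with hX
  set V := Real.sqrt (∑ i, ∑ j, ‖v i - v j‖^2) with hV
  have hX0 : 0 ≤ X := Real.sqrt_nonneg _
  have hV0 : 0 ≤ V := Real.sqrt_nonneg _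
  have hXsq : X^2 = ∑ i, ∑ j, ‖x i - x j‖^2 := Real.sq_sqrt (by positivity)
  have hVsq : V^2 = ∑ i, ∑ j, ‖v i - v j‖^2 := Real.sq_sqrt (by positivity)
  set W := PiLp 2 (fun _ : Fin N × Fin N => EuclideanSpace ℝ (Fin d)) with hW
  set Dv : W := WithLp.toLp 2 (fun p : Fin N × Fin N => v p.1 - v p.2) with hDv
  set Dv' : W := WithLp.toLp 2 (fun p : Fin N × Fin N => v' p.1 - v' p.2) with hDv'
  set Er : W := WithLp.toLp 2 (fun p : Fin N × Fin N => ∑ k, (φ p.1 k - φ p.2 k) • (v k - v p.1)) with hEr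
  have hrec' : ∀ i, v' i = v i + (h*κ) • ∑ k, φ i k • (v k - v i) := fun i => hrec i
  have hnormv : ‖Dv‖ = V := by
    rw [hDv, PiLp.norm_eq_of_L2, hV, Fintype.sum_prod_type]
  have hnormv' : ‖Dv'‖ = Real.sqrt (∑ i, ∑ j, ‖v' i - v' j‖^2) := by
    rw [hDv', PiLp.norm_eq_of_L2, Fintype.sum_prod_type]
  have hdecomp : Dv' = (1 - h*κ) • Dv + (h*κ) • Er := by
    refine PiLp.ext fun p => ?_
    obtain ⟨i, j⟩ := p
    show v' i - v' j = (1-h*κ) • (v i - v j) + (h*κ) • (∑ k, (φ i k - φ j k) • (v k - v i))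
    have key : (∑ k, φ i k • (v k - v i)) - (∑ k, φ j k • (v k - v j))
        = (∑ k, (φ i k - φ j k) • (v k - v i)) - (v i - v j) := by
      rw [← Finset.sum_sub_distrib]
      have h1 : ∀ k ∈ Finset.univ, φ i k • (v k - v i) - φ j k • (v k - v j)
          = (φ i k - φ j k) • (v k - v i) + φ j k • (v j - v i) := fun k _ => by module
      rw [Finset.sum_congr rfl h1, Finset.sum_add_distrib, ← Finset.sum_smul, hφ1 j]
      module
    have hv'ij : v' i - v' j = (v i - v j)
        + (h*κ) • ((∑ k, φ i k • (v k - v i)) - (∑ k, φ j k • (v k - v j))) := by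
      rw [hrec' i, hrec' j]; module
    rw [hv'ij, key]; module
  have hnorm' : ‖Dv'‖ ≤ (1-h*κ)*‖Dv‖ + (h*κ)*‖Er‖ := by
    rw [hdecomp]
    refine le_trans (norm_add_le _ _) ?_
    rw [norm_smul, norm_smul, Real.norm_eq_abs, Real.norm_eq_abs,
      abs_of_nonneg (by linarith), abs_of_nonneg hκh0]
  have hErp : ∀ p : Fin N × Fin N,
      ‖Er p‖ ≤ Lφ * ‖x p.1 - x p.2‖ * ∑ k, ‖v k - v p.1‖ := by
    intro p
    calc ‖Er p‖ ≤ ∑ k, ‖(φ p.1 k - φ p.2 k) • (v k - v p.1)‖ := by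
          rw [hEr, PiLp.toLp_apply]; exact norm_sum_le _ _
      _ = ∑ k, |φ p.1 k - φ p.2 k| * ‖v k - v p.1‖ := by
          simp [norm_smul]
      _ ≤ ∑ k, (Lφ * ‖x p.1 - x p.2‖) * ‖v k - v p.1‖ :=
          Finset.sum_le_sum fun k _ =>
            mul_le_mul_of_nonneg_right (hφlip p.1 p.2 k) (norm_nonneg _)
      _ = Lφ * ‖x p.1 - x p.2‖ * ∑ k, ‖v k - v p.1‖ := by rw [Finset.mul_sum]
  have hT : ∀ i : Fin N, (∑ k, ‖v k - v i‖)^2 ≤ (N:ℝ) * ∑ k, ‖v k - v i‖^2 := by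
    intro i
    simpa using sq_sum_le_card_mul_sum_sq (s := (Finset.univ : Finset (Fin N)))
      (f := fun k => ‖v k - v i‖)
  have hU : ∀ i, ∑ k, ‖v k - v i‖^2 ≤ V^2 := by
    intro i
    rw [hVsq]
    calc ∑ k, ‖v k - v i‖^2 = ∑ k, ‖v i - v k‖^2 := by simp_rw [norm_sub_rev]
      _ ≤ ∑ i', ∑ k, ‖v i' - v k‖^2 :=
          Finset.single_le_sum (f := fun i' => ∑ k, ‖v i' - v k‖^2)
            (fun i' _ => by positivity) (Finset.mem_univ i)
  have hErnorm : ‖Er‖ ≤ Lφ * (N:ℝ) * X * V := by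
    have hNsq : (N:ℝ) ≤ (N:ℝ)^2 := by
      have h1N : (1:ℝ) ≤ N := by exact_mod_cast hN
      nlinarith
    have hb : ∑ p : Fin N × Fin N, ‖Er p‖^2 ≤ (Lφ * (N:ℝ) * X * V)^2 := by
      calc ∑ p : Fin N × Fin N, ‖Er p‖^2
          ≤ ∑ p : Fin N × Fin N, Lφ^2 * ‖x p.1 - x p.2‖^2 * ((N:ℝ) * V^2) := by
            apply Finset.sum_le_sum
            intro p _
            calc ‖Er p‖^2 ≤ (Lφ * ‖x p.1 - x p.2‖ * ∑ k, ‖v k - v p.1‖)^2 :=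
                  pow_le_pow_left₀ (norm_nonneg _) (hErp p) 2
              _ = Lφ^2 * ‖x p.1 - x p.2‖^2 * (∑ k, ‖v k - v p.1‖)^2 := by ring
              _ ≤ Lφ^2 * ‖x p.1 - x p.2‖^2 * ((N:ℝ) * ∑ k, ‖v k - v p.1‖^2) :=
                  mul_le_mul_of_nonneg_left (hT p.1) (by positivity)
              _ ≤ Lφ^2 * ‖x p.1 - x p.2‖^2 * ((N:ℝ) * V^2) :=
                  mul_le_mul_of_nonneg_left
                    (mul_le_mul_of_nonneg_left (hU p.1) (Nat.cast_nonneg N)) (by positivity)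
        _ = (∑ p : Fin N × Fin N, ‖x p.1 - x p.2‖^2) * (Lφ^2 * ((N:ℝ) * V^2)) := by
            rw [Finset.sum_mul]
            exact Finset.sum_congr rfl fun p _ => by ring
        _ = X^2 * (Lφ^2 * ((N:ℝ) * V^2)) := by rw [Fintype.sum_prod_type, ← hXsq]
        _ ≤ (Lφ * (N:ℝ) * X * V)^2 := by
            nlinarith [mul_nonneg (sq_nonneg (Lφ*X*V)) (sub_nonneg.mpr hNsq)]
    calc ‖Er‖ = Real.sqrt (∑ p : Fin N × Fin N, ‖Er p‖^2) := PiLp.norm_eq_of_L2 _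
      _ ≤ Real.sqrt ((Lφ*(N:ℝ)*X*V)^2) := Real.sqrt_le_sqrt hb
      _ = Lφ*(N:ℝ)*X*V := Real.sqrt_sq
          (by exact mul_nonneg (mul_nonneg (mul_nonneg hLφ0.le hNR.le) hX0) hV0)
  rw [← hnormv']
  calc ‖Dv'‖ ≤ (1-h*κ)*‖Dv‖ + (h*κ)*‖Er‖ := hnorm'
    _ ≤ (1-h*κ)*V + (h*κ)*(Lφ*(N:ℝ)*X*V) := by
        rw [hnormv]
        exact add_le_add le_rfl (mul_le_mul_of_nonneg_left hErnorm hκh0)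
    _ = (1 - h*κ*(1 - Lφ*(N:ℝ)*X)) * V := by ring

lemma integral_lin (a b c : ℝ) :
    ∫ s in a..b, (1 - c*s) = (b - c*b^2/2) - (a - c*a^2/2) := by
  have h1 : IntervalIntegrable (fun s : ℝ => c * s) MeasureTheory.volume a b :=
    (continuous_const.mul continuous_id).intervalIntegrable _ _
  have h2 : (fun s : ℝ => 1 - c*s) = fun s : ℝ => (1:ℝ) - c*s := rfl
  rw [intervalIntegral.integral_sub intervalIntegrable_const h1,
    intervalIntegral.integral_const, intervalIntegral.integral_const_mul,
    integral_id]
  simp only [smul_eq_mul, mul_one]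
  ring

theorem stmt6 {d N : ℕ} (hN : 0 < N) (a : ℝ → ℝ) (c₁ c₂ La κ : ℝ)
    (hc₁ : 0 < c₁) (hc₁₂ : c₁ ≤ c₂) (hLa : 0 < La) (hκ : 0 < κ)
    (hbound : ∀ r : ℝ, 0 ≤ r → c₁ ≤ a r ∧ a r ≤ c₂)
    (hlip : ∀ r₁ r₂ : ℝ, 0 ≤ r₁ → 0 ≤ r₂ → |a r₁ - a r₂| ≤ La * |r₁ - r₂|)
    (Lφ M : ℝ) (hLφ : Lφ = (La / (N * c₁)) * (1 + c₂ / c₁)) (hM : M = 1 / (4 * N * Lφ)) :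
    ∀ C : ℝ, 0 < C → C < 1 → ∃ h₀ > 0, ∀ h : ℝ, 0 < h → h < h₀ → h < min 1 (1 / κ) →
      ∀ x v : ℕ → Fin N → EuclideanSpace ℝ (Fin d),
        (∀ n i, x (n + 1) i = x n i + h • v n i) →
        (∀ n i, v (n + 1) i = v n i + (h * κ) •
          ∑ j, (a ‖x n i - x n j‖ / ∑ k, a ‖x n i - x n k‖) • (v n j - v n i)) →
        Real.sqrt (∑ i, ∑ j, ‖x 0 i - x 0 j‖ ^ 2) < M →
        Real.sqrt (∑ i, ∑ j, ‖v 0 i - v 0 j‖ ^ 2)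
          < κ * ∫ s in (Real.sqrt (∑ i, ∑ j, ‖x 0 i - x 0 j‖ ^ 2))..M, (1 - Lφ * N * s) →
        ∀ n : ℕ, Real.sqrt (∑ i, ∑ j, ‖v n i - v n j‖ ^ 2)
          ≤ Real.sqrt (∑ i, ∑ j, ‖v 0 i - v 0 j‖ ^ 2)
            * Real.exp (-(C * κ * (1 - Lφ * N * M)) * n * h) := by
  intro C hC0 hC1
  refine ⟨1, one_pos, ?_⟩
  intro h hh hh1 hmin x v hxrec hvrec hx0 hv0 n
  have hNR : (0:ℝ) < N := by exact_mod_cast hN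
  have hc₂ : 0 < c₂ := hc₁.trans_le hc₁₂
  have hLφ0 : 0 < Lφ := by
    rw [hLφ]
    exact mul_pos (div_pos hLa (mul_pos hNR hc₁))
      (by positivity)
  have hκh0 : 0 < h * κ := mul_pos hh hκ
  have hκh1 : h * κ < 1 := by
    have h2 := (lt_min_iff.mp hmin).2
    rwa [lt_div_iff₀ hκ] at h2
  have hβM : Lφ * (N:ℝ) * M = 1/4 := by
    rw [hM]
    field_simp
  -- the sequences
  set X : ℕ → ℝ := fun n => Real.sqrt (∑ i, ∑ j, ‖x n i - x n j‖ ^ 2) with hXdef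
  set V : ℕ → ℝ := fun n => Real.sqrt (∑ i, ∑ j, ‖v n i - v n j‖ ^ 2) with hVdef
  have hXnn : ∀ n, 0 ≤ X n := fun n => Real.sqrt_nonneg _
  have hVnn : ∀ n, 0 ≤ V n := fun n => Real.sqrt_nonneg _
  have hXs : ∀ n, X (n+1) ≤ X n + h * V n := by
    intro m
    set Dx1 : PiLp 2 (fun _ : Fin N × Fin N => EuclideanSpace ℝ (Fin d)) :=
      WithLp.toLp 2 (fun p : Fin N × Fin N => x (m+1) p.1 - x (m+1) p.2) with hDx1
    set Dx0 : PiLp 2 (fun _ : Fin N × Fin N => EuclideanSpace ℝ (Fin d)) :=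
      WithLp.toLp 2 (fun p : Fin N × Fin N => x m p.1 - x m p.2) with hDx0
    set Dvm : PiLp 2 (fun _ : Fin N × Fin N => EuclideanSpace ℝ (Fin d)) :=
      WithLp.toLp 2 (fun p : Fin N × Fin N => v m p.1 - v m p.2) with hDvm
    have hdec : Dx1 = Dx0 + h • Dvm := by
      refine PiLp.ext fun p => ?_
      show x (m+1) p.1 - x (m+1) p.2 = (x m p.1 - x m p.2) + h • (v m p.1 - v m p.2)
      rw [hxrec m p.1, hxrec m p.2]
      module
    have e1 : X (m+1) = ‖Dx1‖ := by
      rw [hDx1, PiLp.norm_eq_of_L2, Fintype.sum_prod_type]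
    have e0 : X m = ‖Dx0‖ := by
      rw [hDx0, PiLp.norm_eq_of_L2, Fintype.sum_prod_type]
    have ev : V m = ‖Dvm‖ := by
      rw [hDvm, PiLp.norm_eq_of_L2, Fintype.sum_prod_type]
    rw [e1, e0, ev, hdec]
    refine le_trans (norm_add_le _ _) ?_
    rw [norm_smul, Real.norm_eq_abs, abs_of_pos hh]
  have hVs : ∀ m, V (m+1) ≤ (1 - h*κ*(1 - (Lφ*(N:ℝ)) * X m)) * V m := by
    intro m
    have := vstep hN a c₁ c₂ La κ h Lφ hc₁ hc₁₂ hLa hbound hlip hLφ hLφ0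
      hκh0.le hκh1.le (x m) (v m) (v (m+1)) (hvrec m)
    simpa [hXdef, hVdef, mul_assoc] using this
  have hx0' : X 0 < M := hx0
  have hv0' : V 0 < κ * ((M - (Lφ*(N:ℝ))*M^2/2) - (X 0 - (Lφ*(N:ℝ))*(X 0)^2/2)) := by
    have := hv0
    rwa [integral_lin (X 0) M (Lφ*(N:ℝ))] at this
  have hmain := key_real (Lφ*(N:ℝ)) κ h M X V (mul_pos hLφ0 hNR) hβM hκ hh hκh1
    hXnn hVnn hXs hVs hx0' hv0' n
  -- compare geometric with exponential
  have hψ : (0:ℝ) ≤ 1 - Lφ * (N:ℝ) * M := by rw [hβM]; norm_num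
  have hr0 : 0 ≤ 1 - h*κ*(1 - Lφ*(N:ℝ)*M) := by
    nlinarith
  have hs0 : 0 ≤ h*κ*(1 - Lφ*(N:ℝ)*M) := by positivity
  have hr1 : 1 - h*κ*(1 - Lφ*(N:ℝ)*M) ≤ Real.exp (-(C*κ*(1 - Lφ*(N:ℝ)*M))*h) := by
    have e1 : -(C*κ*(1 - Lφ*(N:ℝ)*M))*h = -(C*(h*κ*(1 - Lφ*(N:ℝ)*M))) := by ring
    rw [e1]
    have h2 : -(C*(h*κ*(1 - Lφ*(N:ℝ)*M))) + 1 ≤ Real.exp (-(C*(h*κ*(1 - Lφ*(N:ℝ)*M)))) :=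
      Real.add_one_le_exp _
    have h3 : C*(h*κ*(1 - Lφ*(N:ℝ)*M)) ≤ h*κ*(1 - Lφ*(N:ℝ)*M) := by
      nlinarith
    linarith
  have hpow : (1 - h*κ*(1 - Lφ*(N:ℝ)*M))^n ≤ Real.exp (-(C*κ*(1 - Lφ*(N:ℝ)*M))*n*h) := by
    calc (1 - h*κ*(1 - Lφ*(N:ℝ)*M))^n
        ≤ (Real.exp (-(C*κ*(1 - Lφ*(N:ℝ)*M))*h))^n := pow_le_pow_left₀ hr0 hr1 n
      _ = Real.exp ((n:ℝ) * (-(C*κ*(1 - Lφ*(N:ℝ)*M))*h)) := (Real.exp_nat_mul _ n).symm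
      _ = Real.exp (-(C*κ*(1 - Lφ*(N:ℝ)*M))*n*h) := by ring_nf
  calc V n ≤ V 0 * (1 - h*κ*(1 - Lφ*(N:ℝ)*M))^n := hmain
    _ ≤ V 0 * Real.exp (-(C*κ*(1 - Lφ*(N:ℝ)*M))*n*h) :=
        mul_le_mul_of_nonneg_left hpow (hVnn 0)
end

section
/- (Existence of asymptotic velocity in the discrete MT model.) Suppose the discrete Motsch–Tadmor solution satisfies the exponential flocking estimate ‖Δ^v(n)‖_F ≤ ‖Δ^v(0)‖_F e^{−Cκψ(M)nh} for all n ≥ 0 with Cκψ(M)h > 0. Then for each particle i the limit v_i^∞ = lim_{n→∞} v_i(n) exists and is finite, and ‖v_i^∞ − v_i(n)‖ ≤ hκ√N·‖Δ^v(0)‖_F·e^{−Cκψ(M)hn}/(1 − e^{−Cκψ(M)h}). -/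
theorem stmt8 {d N : ℕ} (h κ C ψM : ℝ)
    (hh : 0 < h) (hκ : 0 < κ) (hC : 0 < C) (hψM : 0 < ψM)
    (v : ℕ → Fin N → EuclideanSpace ℝ (Fin d))
    (φ : ℕ → Fin N → Fin N → ℝ)
    (hφ0 : ∀ n i j, 0 ≤ φ n i j) (hφ1 : ∀ n i j, φ n i j ≤ 1)
    (hrow : ∀ n i, ∑ j, φ n i j = 1)
    (hv : ∀ n i, v (n + 1) i = v n i + (h * κ) • ∑ j, φ n i j • (v n j - v n i))
    (hflock : ∀ n : ℕ, Real.sqrt (∑ i, ∑ j, ‖v n i - v n j‖ ^ 2)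
      ≤ Real.sqrt (∑ i, ∑ j, ‖v 0 i - v 0 j‖ ^ 2) * Real.exp (-(C * κ * ψM) * n * h)) :
    ∀ i : Fin N, ∃ vinf : EuclideanSpace ℝ (Fin d),
      Filter.Tendsto (fun n => v n i) Filter.atTop (nhds vinf) ∧
      ∀ n : ℕ, ‖vinf - v n i‖
        ≤ h * κ * Real.sqrt N * Real.sqrt (∑ i, ∑ j, ‖v 0 i - v 0 j‖ ^ 2)
            * Real.exp (-(C * κ * ψM) * h * n) / (1 - Real.exp (-(C * κ * ψM) * h)) := by
  intro i
  set α := C * κ * ψM with hα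
  have hαh : 0 < α * h := by positivity
  set r := Real.exp (-(α * h)) with hrdef
  have hr0 : 0 ≤ r := Real.exp_nonneg _
  have hr1 : r < 1 := by
    rw [hrdef]
    exact Real.exp_lt_one_iff.mpr (by linarith)
  set D := Real.sqrt (∑ i, ∑ j, ‖v 0 i - v 0 j‖ ^ 2) with hDdef
  have hD0 : 0 ≤ D := Real.sqrt_nonneg _
  have hrn : ∀ n : ℕ, Real.exp (-α * n * h) = r ^ n := by
    intro n
    rw [hrdef, ← Real.exp_nat_mul]
    ring_nf
  have hstep : ∀ n, dist (v n i) (v (n + 1) i) ≤ (h * κ * D) * r ^ n := by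
    intro n
    rw [dist_eq_norm]
    have e1 : v n i - v (n + 1) i = -((h * κ) • ∑ j, φ n i j • (v n j - v n i)) := by
      rw [hv n i]; abel
    rw [e1, norm_neg, norm_smul, Real.norm_eq_abs, abs_of_pos (by positivity)]
    have e2 : ‖∑ j, φ n i j • (v n j - v n i)‖ ≤ ∑ j, φ n i j * ‖v n j - v n i‖ := by
      refine (norm_sum_le _ _).trans (le_of_eq ?_)
      refine Finset.sum_congr rfl fun j _ => ?_
      rw [norm_smul, Real.norm_eq_abs, abs_of_nonneg (hφ0 n i j)]
    have e3 : ∑ j, φ n i j * ‖v n j - v n i‖ ≤ Real.sqrt (∑ j, ‖v n j - v n i‖ ^ 2) := by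
      have hcs := Finset.sum_mul_sq_le_sq_mul_sq (Finset.univ : Finset (Fin N))
        (fun j => φ n i j) (fun j => ‖v n j - v n i‖)
      have hφsq : ∑ j, φ n i j ^ 2 ≤ 1 := by
        calc ∑ j, φ n i j ^ 2 ≤ ∑ j, φ n i j := by
              refine Finset.sum_le_sum fun j _ => ?_
              nlinarith [hφ0 n i j, hφ1 n i j]
          _ = 1 := hrow n i
      have hg0 : (0:ℝ) ≤ ∑ j, ‖v n j - v n i‖ ^ 2 :=
        Finset.sum_nonneg fun j _ => by positivity
      have hsq := Real.sq_sqrt hg0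
      have hlhs0 : (0:ℝ) ≤ ∑ j, φ n i j * ‖v n j - v n i‖ :=
        Finset.sum_nonneg fun j _ => mul_nonneg (hφ0 n i j) (norm_nonneg _)
      nlinarith [Real.sqrt_nonneg (∑ j, ‖v n j - v n i‖ ^ 2)]
    have e4 : Real.sqrt (∑ j, ‖v n j - v n i‖ ^ 2)
        ≤ Real.sqrt (∑ i', ∑ j, ‖v n i' - v n j‖ ^ 2) := by
      apply Real.sqrt_le_sqrt
      have : ∑ j, ‖v n j - v n i‖ ^ 2 = ∑ j, ‖v n i - v n j‖ ^ 2 := by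
        refine Finset.sum_congr rfl fun j _ => ?_
        rw [norm_sub_rev]
      rw [this]
      exact Finset.single_le_sum (f := fun i' => ∑ j, ‖v n i' - v n j‖ ^ 2)
        (fun i' _ => Finset.sum_nonneg fun j _ => by positivity) (Finset.mem_univ i)
    have e5 : Real.sqrt (∑ i', ∑ j, ‖v n i' - v n j‖ ^ 2) ≤ D * r ^ n := by
      have := hflock n
      rwa [hrn n] at this
    calc h * κ * ‖∑ j, φ n i j • (v n j - v n i)‖
        ≤ h * κ * (D * r ^ n) := by
          apply mul_le_mul_of_nonneg_left _ (by positivity)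
          exact e2.trans (e3.trans (e4.trans e5))
      _ = h * κ * D * r ^ n := by ring
  have hcauchy : CauchySeq (fun n => v n i) := cauchySeq_of_le_geometric r _ hr1 hstep
  obtain ⟨a, ha⟩ := cauchySeq_tendsto_of_complete hcauchy
  refine ⟨a, ha, fun n => ?_⟩
  have hbd := dist_le_of_le_geometric_of_tendsto r _ hr1 hstep ha n
  have hN1 : (1 : ℝ) ≤ Real.sqrt N := by
    rw [show (1 : ℝ) = Real.sqrt 1 by simp]
    apply Real.sqrt_le_sqrt
    exact_mod_cast i.pos
  have h1r : 0 < 1 - r := by linarith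
  have key : ‖a - v n i‖ ≤ h * κ * D * r ^ n / (1 - r) := by
    rw [← dist_eq_norm, dist_comm]
    exact hbd
  have hrneq : Real.exp (-α * h * n) = r ^ n := by
    rw [hrdef, ← Real.exp_nat_mul]; ring_nf
  have hreq : Real.exp (-α * h) = r := by rw [hrdef]; ring_nf
  rw [hrneq, hreq]
  refine key.trans ?_
  have ha0 : 0 ≤ h * κ * D * r ^ n := by positivity
  have hnum : h * κ * D * r ^ n ≤ h * κ * Real.sqrt N * D * r ^ n := by
    calc h * κ * D * r ^ n = 1 * (h * κ * D * r ^ n) := by ring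
      _ ≤ Real.sqrt N * (h * κ * D * r ^ n) := mul_le_mul_of_nonneg_right hN1 ha0
      _ = h * κ * Real.sqrt N * D * r ^ n := by ring
  exact div_le_div_of_nonneg_right hnum h1r.le
end

section
/- For two solution pairs of the discrete Motsch–Tadmor model with normalized weights φ_{il} and φ̄_{il}, the weight difference satisfies |φ_{il} − φ̄_{il}| ≤ (L_a/(N c₁))·‖Δ^x_{il} − Δ^{x̄}_{il}‖ + (c₂L_a/(N²c₁²))·∑_{k=1}^N ‖Δ^x_{ik} − Δ^{x̄}_{ik}‖, and consequently ∑_{l=1}^N |φ_{il} − φ̄_{il}|² ≤ (L_a²/(N²c₁²))(1 + c₂/c₁)² ∑_{l=1}^N ‖Δ^x_{il} − Δ^{x̄}_{il}‖². -/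
theorem stmt13 {d N : ℕ} (hN : 0 < N) (a : ℝ → ℝ) (c₁ c₂ La : ℝ)
    (hc₁ : 0 < c₁) (hc₁₂ : c₁ ≤ c₂) (hLa : 0 < La)
    (hbound : ∀ r : ℝ, 0 ≤ r → c₁ ≤ a r ∧ a r ≤ c₂)
    (hlip : ∀ r₁ r₂ : ℝ, 0 ≤ r₁ → 0 ≤ r₂ → |a r₁ - a r₂| ≤ La * |r₁ - r₂|)
    (x xb : Fin N → EuclideanSpace ℝ (Fin d))
    (φ φb : Fin N → Fin N → ℝ)
    (hφ : ∀ i l, φ i l = a ‖x i - x l‖ / ∑ k, a ‖x i - x k‖)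
    (hφb : ∀ i l, φb i l = a ‖xb i - xb l‖ / ∑ k, a ‖xb i - xb k‖) :
    ∀ i : Fin N,
      (∀ l : Fin N, |φ i l - φb i l|
        ≤ (La / (N * c₁)) * ‖(x i - x l) - (xb i - xb l)‖
          + (c₂ * La / ((N : ℝ) ^ 2 * c₁ ^ 2)) * ∑ k, ‖(x i - x k) - (xb i - xb k)‖) ∧
      ∑ l, |φ i l - φb i l| ^ 2
        ≤ (La ^ 2 / ((N : ℝ) ^ 2 * c₁ ^ 2)) * (1 + c₂ / c₁) ^ 2
            * ∑ l, ‖(x i - x l) - (xb i - xb l)‖ ^ 2 := by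
  intro i
  have hNpos : (0:ℝ) < N := by exact_mod_cast hN
  set e : Fin N → ℝ := fun l => ‖(x i - x l) - (xb i - xb l)‖ with he
  set S : ℝ := ∑ k, a ‖x i - x k‖ with hSdef
  set Sb : ℝ := ∑ k, a ‖xb i - xb k‖ with hSbdef
  set T : ℝ := ∑ k, e k with hTdef
  have hTnn : 0 ≤ T := Finset.sum_nonneg fun k _ => norm_nonneg _
  have hSlb : (N:ℝ) * c₁ ≤ S := by
    calc (N:ℝ) * c₁ = ∑ _k : Fin N, c₁ := by simp [mul_comm]
    _ ≤ S := Finset.sum_le_sum fun k _ => (hbound _ (norm_nonneg _)).1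
  have hSblb : (N:ℝ) * c₁ ≤ Sb := by
    calc (N:ℝ) * c₁ = ∑ _k : Fin N, c₁ := by simp [mul_comm]
    _ ≤ Sb := Finset.sum_le_sum fun k _ => (hbound _ (norm_nonneg _)).1
  have hNc₁ : (0:ℝ) < (N:ℝ) * c₁ := by positivity
  have hSpos : 0 < S := lt_of_lt_of_le hNc₁ hSlb
  have hSbpos : 0 < Sb := lt_of_lt_of_le hNc₁ hSblb
  have ha : ∀ l, |a ‖x i - x l‖ - a ‖xb i - xb l‖| ≤ La * e l := by
    intro l
    calc |a ‖x i - x l‖ - a ‖xb i - xb l‖|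
        ≤ La * |‖x i - x l‖ - ‖xb i - xb l‖| :=
          hlip _ _ (norm_nonneg _) (norm_nonneg _)
      _ ≤ La * e l := by
          gcongr
          exact abs_norm_sub_norm_le _ _
  have hSdiff : |Sb - S| ≤ La * T := by
    have : Sb - S = ∑ k, (a ‖xb i - xb k‖ - a ‖x i - x k‖) := by
      rw [Finset.sum_sub_distrib]
    rw [this]
    calc |∑ k, (a ‖xb i - xb k‖ - a ‖x i - x k‖)|
        ≤ ∑ k, |a ‖xb i - xb k‖ - a ‖x i - x k‖| := Finset.abs_sum_le_sum_abs _ _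
      _ ≤ ∑ k, La * e k := Finset.sum_le_sum fun k _ => by
          rw [abs_sub_comm]; exact ha k
      _ = La * T := by rw [hTdef, Finset.mul_sum]
  have key : ∀ l : Fin N, |φ i l - φb i l|
      ≤ (La / (N * c₁)) * e l + (c₂ * La / ((N : ℝ) ^ 2 * c₁ ^ 2)) * T := by
    intro l
    have hdec : φ i l - φb i l
        = (a ‖x i - x l‖ - a ‖xb i - xb l‖) / S
          + a ‖xb i - xb l‖ * (Sb - S) / (S * Sb) := by
      rw [hφ, hφb, ← hSdef, ← hSbdef]
      field_simp
      ring
    rw [hdec]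
    have habs : |(a ‖x i - x l‖ - a ‖xb i - xb l‖) / S
          + a ‖xb i - xb l‖ * (Sb - S) / (S * Sb)|
        ≤ |a ‖x i - x l‖ - a ‖xb i - xb l‖| / S
          + a ‖xb i - xb l‖ * |Sb - S| / (S * Sb) := by
      refine (abs_add_le _ _).trans ?_
      rw [abs_div, abs_div, abs_of_pos hSpos, abs_of_pos (mul_pos hSpos hSbpos),
        abs_mul, abs_of_nonneg (le_of_lt (lt_of_lt_of_le hc₁ (hbound _ (norm_nonneg _)).1))]
    refine habs.trans (add_le_add ?_ ?_)
    · rw [div_mul_eq_mul_div]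
      exact div_le_div₀ (by positivity) (ha l) hNc₁ hSlb
    · have h1 : a ‖xb i - xb l‖ * |Sb - S| ≤ c₂ * (La * T) := by
        have := (hbound ‖xb i - xb l‖ (norm_nonneg _)).2
        have hc₂pos : 0 < c₂ := lt_of_lt_of_le hc₁ hc₁₂
        exact mul_le_mul this hSdiff (abs_nonneg _)
          (le_of_lt hc₂pos)
      have h2 : (N:ℝ) ^ 2 * c₁ ^ 2 ≤ S * Sb := by
        calc (N:ℝ) ^ 2 * c₁ ^ 2 = ((N:ℝ) * c₁) * ((N:ℝ) * c₁) := by ring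
        _ ≤ S * Sb := mul_le_mul hSlb hSblb (le_of_lt hNc₁) (le_of_lt hSpos)
      calc a ‖xb i - xb l‖ * |Sb - S| / (S * Sb)
          ≤ c₂ * (La * T) / ((N:ℝ) ^ 2 * c₁ ^ 2) :=
            div_le_div₀ (mul_nonneg (le_of_lt (lt_of_lt_of_le hc₁ hc₁₂))
              (mul_nonneg hLa.le hTnn)) h1 (by positivity) h2
        _ = c₂ * La / ((N : ℝ) ^ 2 * c₁ ^ 2) * T := by ring
  refine ⟨key, ?_⟩
  set α : ℝ := La / (N * c₁) with hα
  set γ : ℝ := c₂ * La / ((N : ℝ) ^ 2 * c₁ ^ 2) with hγ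
  set E : ℝ := ∑ l, e l ^ 2 with hE
  have hEnn : 0 ≤ E := Finset.sum_nonneg fun l _ => sq_nonneg _
  have hαnn : 0 ≤ α := by positivity
  have hγnn : 0 ≤ γ := by
    rw [hγ]
    exact div_nonneg (mul_nonneg (le_of_lt (lt_of_lt_of_le hc₁ hc₁₂)) hLa.le) (by positivity)
  have hT2 : T ^ 2 ≤ N * E := by
    have h := Finset.sum_mul_sq_le_sq_mul_sq Finset.univ (fun _ : Fin N => (1:ℝ)) e
    simpa [hTdef, hE, Finset.card_univ] using h
  have step1 : ∑ l, |φ i l - φb i l| ^ 2 ≤ ∑ l, (α * e l + γ * T) ^ 2 :=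
    Finset.sum_le_sum fun l _ => pow_le_pow_left₀ (abs_nonneg _) (key l) 2
  have expand : ∑ l, (α * e l + γ * T) ^ 2
      = α ^ 2 * E + (2 * α * γ) * T ^ 2 + N * γ ^ 2 * T ^ 2 := by
    have h1 : ∀ l : Fin N, (α * e l + γ * T) ^ 2
        = α ^ 2 * e l ^ 2 + (2 * α * γ * T) * e l + γ ^ 2 * T ^ 2 := by
      intro l; ring
    rw [Finset.sum_congr rfl fun l _ => h1 l]
    rw [Finset.sum_add_distrib, Finset.sum_add_distrib, ← Finset.mul_sum,
      ← Finset.mul_sum, ← hE, ← hTdef, Finset.sum_const, Finset.card_univ,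
      Fintype.card_fin, nsmul_eq_mul]
    ring
  have coeff : α ^ 2 + 2 * α * γ * N + γ ^ 2 * N ^ 2
      = (La ^ 2 / ((N : ℝ) ^ 2 * c₁ ^ 2)) * (1 + c₂ / c₁) ^ 2 := by
    rw [hα, hγ]
    field_simp
    ring
  calc ∑ l, |φ i l - φb i l| ^ 2
      ≤ α ^ 2 * E + (2 * α * γ) * T ^ 2 + N * γ ^ 2 * T ^ 2 := by
        rw [← expand]; exact step1
    _ ≤ α ^ 2 * E + (2 * α * γ) * (N * E) + N * γ ^ 2 * (N * E) := by
        gcongr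
    _ = (α ^ 2 + 2 * α * γ * N + γ ^ 2 * N ^ 2) * E := by ring
    _ = (La ^ 2 / ((N : ℝ) ^ 2 * c₁ ^ 2)) * (1 + c₂ / c₁) ^ 2 * E := by rw [coeff]
end

section
/- (Reindexing/Abel-type summation inequality.) Let ψ: ℝ → ℝ be decreasing, and let D(0), D(1), …, D(n^∞) be a finite real sequence with D(n^∞) > D(0). Let D_0 < D_1 < ⋯ < D_K be the increasingly sorted distinct values of {D(n) : D(n) ≥ D(0)} with D_0 = D(0) and D_K = D(n^∞). Then ∑_{q=0}^{K−1} (D_{q+1} − D_q)·ψ(D_q) ≤ ∑_{n=0}^{n^∞−1} (D(n+1) − D(n))·ψ(D(n)). -/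
open MeasureTheory Finset

theorem stmt17 (ψ : ℝ → ℝ) (hψ : ∀ s t : ℝ, s ≤ t → ψ t ≤ ψ s)
    (D : ℕ → ℝ) (ninf : ℕ) (hlast : D 0 < D ninf)
    (K : ℕ) (Dq : ℕ → ℝ)
    (hmono : ∀ q < K, Dq q < Dq (q + 1))
    (h0 : Dq 0 = D 0) (hK : Dq K = D ninf)
    (hvals : ∀ r : ℝ, (∃ q ≤ K, Dq q = r) ↔ (∃ n ≤ ninf, D n = r ∧ D 0 ≤ r)) :
    ∑ q ∈ Finset.range K, (Dq (q + 1) - Dq q) * ψ (Dq q)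
      ≤ ∑ n ∈ Finset.range ninf, (D (n + 1) - D n) * ψ (D n) := by
  have hA : Antitone ψ := fun s t h => hψ s t h
  have hInt : ∀ a b : ℝ, IntervalIntegrable ψ volume a b := fun a b => hA.intervalIntegrable
  -- strict monotonicity of Dq on [0, K]
  have hsm : ∀ j, j ≤ K → ∀ i, i < j → Dq i < Dq j := by
    intro j
    induction j with
    | zero => intro _ i h; omega
    | succ j ih =>
      intro hjK i hij
      rcases Nat.lt_succ_iff_lt_or_eq.mp hij with h | h
      · exact (ih (by omega) i h).trans (hmono j (by omega))
      · subst h; exact hmono i (by omega)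
  have hle : ∀ i j, i ≤ j → j ≤ K → Dq i ≤ Dq j := by
    intro i j hij hjK
    rcases eq_or_lt_of_le hij with h | h
    · exact le_of_eq (by rw [h])
    · exact (hsm j hjK i h).le
  -- constant comparison lemmas for integrals
  have lemA : ∀ a b c : ℝ, a ≤ b → (∀ t ∈ Set.Icc a b, ψ t ≤ c) →
      (∫ t in a..b, ψ t) ≤ (b - a) * c := by
    intro a b c hab h
    have := intervalIntegral.integral_mono_on (f := ψ) (g := fun _ => c) (μ := volume)
      hab (hInt a b) intervalIntegrable_const h
    simpa [smul_eq_mul] using this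
  have lemB : ∀ a b c : ℝ, a ≤ b → (∀ t ∈ Set.Icc a b, c ≤ ψ t) →
      (b - a) * c ≤ ∫ t in a..b, ψ t := by
    intro a b c hab h
    have := intervalIntegral.integral_mono_on (f := fun _ => c) (g := ψ) (μ := volume)
      hab intervalIntegrable_const (hInt a b) h
    simpa [smul_eq_mul] using this
  -- key integral bound for the truncated (below D 0) part
  have L2 : ∀ a b : ℝ,
      (∫ t in (min a (D 0))..(min b (D 0)), ψ t) ≤ (min b (D 0) - min a (D 0)) * ψ a := by
    intro a b
    rcases le_total (min a (D 0)) (min b (D 0)) with h | h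
    · rcases le_total (D 0) a with hDa | haD
      · have ha' : min a (D 0) = D 0 := min_eq_right hDa
        have hb' : min b (D 0) ≤ min a (D 0) := by rw [ha']; exact min_le_right _ _
        have heq : min b (D 0) = min a (D 0) := le_antisymm hb' h
        rw [heq]
        simp [intervalIntegral.integral_same]
      · have ha' : min a (D 0) = a := min_eq_left haD
        apply lemA _ _ _ h
        intro t ht
        exact hψ a t (by rw [← ha']; exact ht.1)
    · have hb : (min a (D 0) - min b (D 0)) * ψ a ≤ ∫ t in (min b (D 0))..(min a (D 0)), ψ t := by
        apply lemB _ _ _ h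
        intro t ht
        exact hψ t a (ht.2.trans (min_le_left _ _))
      rw [intervalIntegral.integral_symm]
      linarith
  -- telescoping of the integrals
  have hIntSum : ∀ N : ℕ,
      ∑ n ∈ Finset.range N, (∫ t in (min (D n) (D 0))..(min (D (n + 1)) (D 0)), ψ t)
        = ∫ t in (min (D 0) (D 0))..(min (D N) (D 0)), ψ t := by
    intro N
    induction N with
    | zero => simp
    | succ N ih =>
      rw [Finset.sum_range_succ, ih,
        intervalIntegral.integral_add_adjacent_intervals (hInt _ _) (hInt _ _)]
  -- the step function pieces
  set T : ℕ → ℝ → ℝ := fun q x => if Dq (q + 1) ≤ x then Dq (q + 1) - Dq q else 0 with hT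
  -- gap lemma : attained values below Dq (q+1) are ≤ Dq q
  have hgap : ∀ n, n ≤ ninf → ∀ q, q < K → D n < Dq (q + 1) → D n ≤ Dq q := by
    intro n hn q hq hlt
    rcases le_or_gt (D 0) (D n) with h | h
    · obtain ⟨q', hq'K, hq'⟩ := (hvals (D n)).2 ⟨n, hn, rfl, h⟩
      rcases le_or_gt q' q with hle' | hgt
      · rw [← hq']; exact hle q' q hle' (le_of_lt hq)
      · exfalso
        have : Dq (q + 1) ≤ Dq q' := hle (q + 1) q' hgt hq'K
        rw [hq'] at this; linarith
    · have : D n < Dq q := by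
        calc D n < D 0 := h
          _ = Dq 0 := h0.symm
          _ ≤ Dq q := hle 0 q (Nat.zero_le _) (le_of_lt hq)
      exact this.le
  -- the reconstruction identity
  have hg : ∀ n, n ≤ ninf →
      D n = min (D n) (D 0) + ∑ q ∈ Finset.range K, T q (D n) := by
    intro n hn
    rcases lt_or_ge (D n) (D 0) with h | h
    · have hz : ∀ q ∈ Finset.range K, T q (D n) = 0 := by
        intro q hq
        simp only [hT]
        rw [if_neg]
        push_neg
        calc D n < D 0 := h
          _ = Dq 0 := h0.symm
          _ ≤ Dq (q + 1) := hle 0 (q + 1) (Nat.zero_le _) (Finset.mem_range.mp hq)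
      rw [Finset.sum_congr rfl hz]
      simp [min_eq_left h.le]
    · obtain ⟨q0, hq0K, hq0⟩ := (hvals (D n)).2 ⟨n, hn, rfl, h⟩
      have hTq : ∀ q ∈ Finset.range K, T q (D n) = if q < q0 then Dq (q + 1) - Dq q else 0 := by
        intro q hq
        have hqK := Finset.mem_range.mp hq
        simp only [hT]
        by_cases hc : q < q0
        · rw [if_pos, if_pos hc]
          rw [← hq0]; exact hle (q + 1) q0 hc hq0K
        · rw [if_neg, if_neg hc]
          push_neg at hc ⊢
          rw [← hq0]
          calc Dq q0 ≤ Dq q := hle q0 q hc (le_of_lt hqK)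
            _ < Dq (q + 1) := hmono q hqK
      rw [Finset.sum_congr rfl hTq]
      have hsub : ∑ q ∈ Finset.range q0, (if q < q0 then Dq (q + 1) - Dq q else 0)
          = ∑ q ∈ Finset.range K, (if q < q0 then Dq (q + 1) - Dq q else 0) := by
        apply Finset.sum_subset (Finset.range_subset_range.mpr hq0K)
        intro x _ hx
        rw [if_neg (by simpa using hx)]
      rw [← hsub]
      have : ∑ q ∈ Finset.range q0, (if q < q0 then Dq (q + 1) - Dq q else 0)
          = ∑ q ∈ Finset.range q0, (Dq (q + 1) - Dq q) := by
        apply Finset.sum_congr rfl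
        intro q hq
        rw [if_pos (Finset.mem_range.mp hq)]
      rw [this, Finset.sum_range_sub (fun q => Dq q), h0, min_eq_right h]
      linarith
  -- split the right-hand sum
  have hsplit : ∑ n ∈ Finset.range ninf, (D (n + 1) - D n) * ψ (D n)
      = (∑ n ∈ Finset.range ninf, (min (D (n + 1)) (D 0) - min (D n) (D 0)) * ψ (D n))
        + ∑ q ∈ Finset.range K, ∑ n ∈ Finset.range ninf,
            (T q (D (n + 1)) - T q (D n)) * ψ (D n) := by
    rw [Finset.sum_comm (s := Finset.range K)]
    rw [← Finset.sum_add_distrib]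
    apply Finset.sum_congr rfl
    intro n hn
    have hn' := Finset.mem_range.mp hn
    have e1 := hg n (le_of_lt hn')
    have e2 := hg (n + 1) hn'
    have : D (n + 1) - D n = (min (D (n + 1)) (D 0) - min (D n) (D 0))
        + ∑ q ∈ Finset.range K, (T q (D (n + 1)) - T q (D n)) := by
      rw [Finset.sum_sub_distrib]; linarith
    rw [this, add_mul, Finset.sum_mul]
  rw [hsplit]
  -- part 1 : truncated part is ≥ 0
  have part1 : 0 ≤ ∑ n ∈ Finset.range ninf, (min (D (n + 1)) (D 0) - min (D n) (D 0)) * ψ (D n) := by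
    have h1 : ∑ n ∈ Finset.range ninf, (∫ t in (min (D n) (D 0))..(min (D (n + 1)) (D 0)), ψ t)
        ≤ ∑ n ∈ Finset.range ninf, (min (D (n + 1)) (D 0) - min (D n) (D 0)) * ψ (D n) :=
      Finset.sum_le_sum (fun n _ => L2 (D n) (D (n + 1)))
    rw [hIntSum ninf, min_eq_right hlast.le, min_self, intervalIntegral.integral_same] at h1
    exact h1
  -- part 2 : each level contributes at least its term
  have part2 : ∑ q ∈ Finset.range K, (Dq (q + 1) - Dq q) * ψ (Dq q)
      ≤ ∑ q ∈ Finset.range K, ∑ n ∈ Finset.range ninf,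
          (T q (D (n + 1)) - T q (D n)) * ψ (D n) := by
    apply Finset.sum_le_sum
    intro q hq
    have hqK := Finset.mem_range.mp hq
    have hΔ : 0 ≤ Dq (q + 1) - Dq q := sub_nonneg.mpr (hmono q hqK).le
    have pointwise : ∀ n ∈ Finset.range ninf,
        (T q (D (n + 1)) - T q (D n)) * ψ (Dq q) ≤ (T q (D (n + 1)) - T q (D n)) * ψ (D n) := by
      intro n hn
      have hn' := Finset.mem_range.mp hn
      simp only [hT]
      by_cases h1 : Dq (q + 1) ≤ D (n + 1) <;> by_cases h2 : Dq (q + 1) ≤ D n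
      · simp [h1, h2]
      · -- up-crossing: D n < Dq (q+1), so D n ≤ Dq q, hence ψ (Dq q) ≤ ψ (D n)
        rw [if_pos h1, if_neg h2]
        have hDn : D n ≤ Dq q := hgap n (le_of_lt hn') q hqK (lt_of_not_ge h2)
        have := hψ (D n) (Dq q) hDn
        nlinarith
      · -- down-crossing: Dq q ≤ D n, so ψ (D n) ≤ ψ (Dq q), coefficient nonpositive
        rw [if_neg h1, if_pos h2]
        have hDn : Dq q ≤ D n := ((hmono q hqK).le).trans h2
        have := hψ (Dq q) (D n) hDn
        nlinarith
      · simp [h1, h2]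
    calc (Dq (q + 1) - Dq q) * ψ (Dq q)
        = (T q (D ninf) - T q (D 0)) * ψ (Dq q) := by
          have hTninf : T q (D ninf) = Dq (q + 1) - Dq q := by
            simp only [hT]
            rw [if_pos]
            rw [← hK]; exact hle (q + 1) K hqK le_rfl
          have hT0 : T q (D 0) = 0 := by
            simp only [hT]
            rw [if_neg]
            push_neg
            rw [← h0]; exact hsm (q + 1) hqK 0 (Nat.succ_pos q)
          rw [hTninf, hT0, sub_zero]
      _ = ∑ n ∈ Finset.range ninf, (T q (D (n + 1)) - T q (D n)) * ψ (Dq q) := by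
          rw [← Finset.sum_mul, Finset.sum_range_sub (fun n => T q (D n))]
      _ ≤ ∑ n ∈ Finset.range ninf, (T q (D (n + 1)) - T q (D n)) * ψ (D n) :=
          Finset.sum_le_sum pointwise
  linarith
end
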